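/- Fix ε > 0 and η > 0, and let (p_n) be a sequence with √((2+ε)·(log n)/n) ≤ p_n < 1/2 and 2·p_n·e^{1−2p_n} ≤ 1 − (2+η)·(log n)/n for all large n. Let S_n be the number of Seymour vertices of the random digraph D(n,p_n). Then P(S_n = n) → 1 as n → ∞; that is, with high probability every vertex of D(n,p_n) is a Seymour vertex. -/

import Mathlib

/-! Model of the random digraph `D(n, p)` on vertex set `Fin n`:  a sample point assigns a
Boolean to every ordered pair of vertices, and the arc `u → v` (for `u ≠ v`) is present iff
the Boolean at `(u, v)` is `true`.  The probability of a sample point is the product, over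
ordered pairs of distinct vertices, of `p` for each present arc and `1 − p` for each absent
arc (the unused diagonal coordinates are forced to be `false`), so that the arcs are
independent and each is present with probability `p`. -/

/-- The sample space of the random digraph on `n` vertices. -/
abbrev DOmega (n : ℕ) := Fin n → Fin n → Bool

/-- `dadj ω u v` : the arc `u → v` is present in the digraph coded by `ω`. -/
def dadj {n : ℕ} (ω : DOmega n) (u v : Fin n) : Prop :=
  u ≠ v ∧ ω u v = true

/-- The probability weight of the sample point `ω` in the model `D(n, p)`. -/
noncomputable def dwt {n : ℕ} (p : ℝ) (ω : DOmega n) : ℝ :=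
  ∏ u : Fin n, ∏ v : Fin n,
    if u = v then (if ω u v then 0 else 1) else (if ω u v then p else 1 - p)

/-- Probability of an event in the random digraph model `D(n, p)`. -/
noncomputable def dPr {n : ℕ} (p : ℝ) (E : Set (DOmega n)) : ℝ :=
  ∑ ω : DOmega n, E.indicator (dwt p) ω

/-- Expectation of a random variable in the random digraph model `D(n, p)`. -/
noncomputable def dEx {n : ℕ} (p : ℝ) (f : DOmega n → ℝ) : ℝ :=
  ∑ ω : DOmega n, dwt p ω * f ω

/-- The first out-neighborhood of `v`: vertices at directed distance exactly 1. -/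
def dN1 {n : ℕ} (ω : DOmega n) (v : Fin n) : Set (Fin n) := {w | dadj ω v w}

/-- The second out-neighborhood of `v`: vertices at directed distance exactly 2. -/
def dN2 {n : ℕ} (ω : DOmega n) (v : Fin n) : Set (Fin n) :=
  {w | w ≠ v ∧ ¬ dadj ω v w ∧ ∃ x, dadj ω v x ∧ dadj ω x w}

/-- `v` is a Seymour vertex of the digraph coded by `ω`. -/
def dSeymour {n : ℕ} (ω : DOmega n) (v : Fin n) : Prop :=
  (dN1 ω v).ncard ≤ (dN2 ω v).ncard

/-- The number of Seymour vertices. -/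
noncomputable def dS {n : ℕ} (ω : DOmega n) : ℕ := {v | dSeymour ω v}.ncard

/-- The expected number of Seymour vertices of `D(n, p)`. -/
noncomputable def dES (n : ℕ) (p : ℝ) : ℝ := dEx p (fun ω : DOmega n => (dS ω : ℝ))

/-! A vertex `v` whose out-neighbourhood `S = N₁(v)` has `d` elements can fail to be a Seymour
vertex only if `d ≥ (n - 1) / 2`, or `d < (2 + ε/2) log n / p`, or else at least `n - 2d` of the
vertices outside `{v} ∪ S` lie outside `N₂(v)`, i.e. receive no arc from `S`. The first two
events are tails of the binomial out-degree, bounded through its moment generating function; the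
upper tail is where `2p e^{1-2p} ≤ 1 - (2 + η) log n / n` enters. The third is bounded by a union
over `S` and over such sets `T` of `n - 2d` vertices: the event `N₁(v) = S` involves only arcs
leaving `v`, so it is independent of the absence of the `d (n - 2d)` arcs from `S` to `T`, and
with at most `n^{n - 2d}` choices of `T` the bound is
`(n (1 - p)^d)^{n - 2d} ≤ n (1 - p)^d ≤ n^{-(1 + ε/2)}`. Each event has probability `o(1/n)`,
and a union bound over the `n` vertices finishes the proof. -/

open Finset Real Filter Topology

section ProductMeasure

variable {n : ℕ} {p : ℝ}

noncomputable def arcWeight (p : ℝ) {n : ℕ} (u w : Fin n) (b : Bool) : ℝ :=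
  if u = w then (if b then 0 else 1) else (if b then p else 1 - p)

lemma arcWeight_nonneg (h0 : 0 ≤ p) (h1 : p ≤ 1) (u w : Fin n) (b : Bool) :
    0 ≤ arcWeight p u w b := by
  unfold arcWeight; split_ifs <;> linarith

lemma sum_arcWeight (u w : Fin n) : ∑ b, arcWeight p u w b = 1 := by
  by_cases h : u = w <;> simp [arcWeight, h]

lemma sum_pi_pi_prod {ι κ β R : Type*} [Fintype ι] [Fintype κ] [Fintype β] [DecidableEq ι]
    [DecidableEq κ] [CommSemiring R] (g : ι → κ → β → R) :
    ∑ ω : ι → κ → β, ∏ i, ∏ j, g i j (ω i j) = ∏ i, ∏ j, ∑ b, g i j b := by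
  simp only [Fintype.prod_sum]

lemma dEx_prod_prod (h : Fin n → Fin n → Bool → ℝ) :
    dEx p (fun ω => ∏ u, ∏ w, h u w (ω u w))
      = ∏ u, ∏ w, ∑ b, arcWeight p u w b * h u w b := by
  simp only [dEx, dwt, ← sum_pi_pi_prod, ← prod_mul_distrib]
  rfl

lemma sum_dwt : ∑ ω : DOmega n, dwt p ω = 1 := by
  have h := dEx_prod_prod (n := n) (p := p) fun _ _ _ => 1
  simpa only [dEx, mul_one, sum_arcWeight, prod_const_one] using h

lemma dwt_nonneg (h0 : 0 ≤ p) (h1 : p ≤ 1) (ω : DOmega n) : 0 ≤ dwt p ω :=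
  prod_nonneg fun _ _ => prod_nonneg fun _ _ => arcWeight_nonneg h0 h1 _ _ _

lemma dPr_nonneg (h0 : 0 ≤ p) (h1 : p ≤ 1) (E : Set (DOmega n)) : 0 ≤ dPr p E :=
  sum_nonneg fun ω _ => Set.indicator_nonneg (fun ω _ => dwt_nonneg h0 h1 ω) ω

lemma dPr_add_dPr_compl (E : Set (DOmega n)) : dPr p E + dPr p Eᶜ = 1 := by
  simp only [dPr, ← sum_add_distrib, Set.indicator_self_add_compl_apply, sum_dwt]

lemma dPr_eq_dEx_indicator (E : Set (DOmega n)) : dPr p E = dEx p (E.indicator 1) := by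
  refine sum_congr rfl fun ω _ => ?_
  by_cases hω : ω ∈ E <;> simp [hω]

lemma dPr_le_sum_of_subset_biUnion (h0 : 0 ≤ p) (h1 : p ≤ 1) {ι : Type*} (I : Finset ι)
    (F : ι → Set (DOmega n)) {E : Set (DOmega n)} (hE : E ⊆ ⋃ i ∈ I, F i) :
    dPr p E ≤ ∑ i ∈ I, dPr p (F i) := by
  calc dPr p E ≤ ∑ ω, ∑ i ∈ I, (F i).indicator (dwt p) ω := sum_le_sum fun ω _ => ?_
    _ = ∑ i ∈ I, dPr p (F i) := sum_comm
  by_cases hω : ω ∈ E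
  · obtain ⟨i, hi, hωi⟩ := Set.mem_iUnion₂.mp (hE hω)
    rw [Set.indicator_of_mem hω, ← Set.indicator_of_mem hωi (dwt p)]
    exact single_le_sum (fun j _ => Set.indicator_nonneg (fun ω _ => dwt_nonneg h0 h1 ω) ω) hi
  · rw [Set.indicator_of_notMem hω]
    exact sum_nonneg fun j _ => Set.indicator_nonneg (fun ω _ => dwt_nonneg h0 h1 ω) ω

lemma dPr_mono (h0 : 0 ≤ p) (h1 : p ≤ 1) {E F : Set (DOmega n)} (h : E ⊆ F) :
    dPr p E ≤ dPr p F := by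
  simpa using dPr_le_sum_of_subset_biUnion h0 h1 {()} (fun _ => F)
    fun ω hω => by simpa using h hω

lemma dPr_union_le (h0 : 0 ≤ p) (h1 : p ≤ 1) (E F : Set (DOmega n)) :
    dPr p (E ∪ F) ≤ dPr p E + dPr p F := by
  simpa using dPr_le_sum_of_subset_biUnion h0 h1 univ (fun b => bif b then E else F)
    (by intro ω; simp [Bool.exists_bool, or_comm])

lemma dPr_le_dEx_div (h0 : 0 ≤ p) (h1 : p ≤ 1) {f : DOmega n → ℝ} (hf : 0 ≤ f) {t : ℝ}
    (ht : 0 < t) {E : Set (DOmega n)} (hE : ∀ ω ∈ E, t ≤ f ω) :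
    dPr p E ≤ dEx p f / t := by
  rw [le_div_iff₀ ht, dPr, sum_mul, dEx]
  refine sum_le_sum fun ω _ => ?_
  by_cases hω : ω ∈ E
  · rw [Set.indicator_of_mem hω]
    exact mul_le_mul_of_nonneg_left (hE ω hω) (dwt_nonneg h0 h1 ω)
  · rw [Set.indicator_of_notMem hω, zero_mul]
    exact mul_nonneg (dwt_nonneg h0 h1 ω) (hf ω)

lemma dPr_setOf_forall (A : Fin n → Fin n → Bool → Prop) [∀ u w, DecidablePred (A u w)] :
    dPr p {ω | ∀ u w, A u w (ω u w)}
      = ∏ u, ∏ w, ∑ b, if A u w b then arcWeight p u w b else 0 := by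
  have hind : ({ω | ∀ u w, A u w (ω u w)} : Set (DOmega n)).indicator 1
      = fun ω => ∏ u, ∏ w, if A u w (ω u w) then (1 : ℝ) else 0 := by
    ext ω; simp [Set.indicator_apply, prod_boole]
  rw [dPr_eq_dEx_indicator, hind, dEx_prod_prod fun u w b => if A u w b then 1 else 0]
  simp only [mul_ite, mul_one, mul_zero]

lemma dPr_setOf_forall_and (A B : Fin n → Fin n → Bool → Prop)
    [∀ u w, DecidablePred (A u w)] [∀ u w, DecidablePred (B u w)] (hAB : ∀ u w, (∀ b, A u w b) ∨ ∀ b, B u w b) :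
    dPr p {ω | ∀ u w, A u w (ω u w) ∧ B u w (ω u w)}
      = dPr p {ω | ∀ u w, A u w (ω u w)} * dPr p {ω | ∀ u w, B u w (ω u w)} := by
  rw [dPr_setOf_forall fun u w b => A u w b ∧ B u w b, dPr_setOf_forall A, dPr_setOf_forall B,
    ← prod_mul_distrib]
  refine prod_congr rfl fun u _ => ?_
  rw [← prod_mul_distrib]
  refine prod_congr rfl fun w _ => ?_
  rcases hAB u w with hA | hB
  · simp only [hA, true_and, if_true, sum_arcWeight, one_mul]
  · simp only [hB, and_true, if_true, sum_arcWeight, mul_one]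

end ProductMeasure

section OutDegree

variable {n : ℕ} {p : ℝ}

def outNbhd (ω : DOmega n) (v : Fin n) : Finset (Fin n) := {w | v ≠ w ∧ ω v w = true}

lemma coe_outNbhd (ω : DOmega n) (v : Fin n) : (outNbhd ω v : Set (Fin n)) = dN1 ω v := by
  ext w; simp [outNbhd, dN1, dadj]

lemma outNbhd_subset_erase (ω : DOmega n) (v : Fin n) : outNbhd ω v ⊆ univ.erase v :=
  fun w hw => mem_erase.mpr ⟨fun h => by simp [outNbhd, h] at hw, mem_univ w⟩

lemma prod_prod_ite_eq_and (v : Fin n) (f : Fin n → ℝ) (P : Fin n → Fin n → Prop)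
    [DecidableRel P] :
    ∏ u, ∏ w, (if u = v ∧ P u w then f w else 1) = ∏ w, if P v w then f w else 1 := by
  simp only [ite_and, prod_ite_irrel, prod_const_one, prod_ite_eq', mem_univ, if_true]

lemma pow_card_outNbhd (c : ℝ) (ω : DOmega n) (v : Fin n) :
    c ^ #(outNbhd ω v) = ∏ u, ∏ w, if u = v ∧ u ≠ w ∧ ω u w = true then c else 1 := by
  rw [prod_prod_ite_eq_and v (fun _ => c) fun u w => u ≠ w ∧ ω u w = true, prod_ite,
    prod_const_one, mul_one, prod_const, outNbhd]

lemma dEx_pow_card_outNbhd (v : Fin n) (c : ℝ) :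
    dEx p (fun ω => c ^ #(outNbhd ω v)) = (1 - p + p * c) ^ (n - 1) := by
  have hfactor : ∀ u w : Fin n,
      ∑ b, arcWeight p u w b * (if u = v ∧ u ≠ w ∧ b = true then c else 1)
        = if u = v ∧ u ≠ w then 1 - p + p * c else 1 := by
    intro u w
    by_cases huw : u = w
    · simp [arcWeight, huw]
    · rcases eq_or_ne u v with rfl | huv
      · simp [arcWeight, huw, add_comm]
      · simp [arcWeight, huw, huv]
  simp only [pow_card_outNbhd]
  rw [dEx_prod_prod fun u w b => if u = v ∧ u ≠ w ∧ b = true then c else 1]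
  simp only [hfactor]
  rw [prod_prod_ite_eq_and v (fun _ => 1 - p + p * c) fun u w => u ≠ w, prod_ite, prod_const_one,
    mul_one, prod_const, filter_ne, card_erase_of_mem (mem_univ v), card_univ, Fintype.card_fin]

end OutDegree

section Tails

variable {n : ℕ} {p : ℝ}

lemma dPr_le_pow_card_outNbhd (h0 : 0 ≤ p) (h1 : p ≤ 1) (v : Fin n) {c r : ℝ} (hc : 0 < c)
    {E : Set (DOmega n)} (hE : ∀ ω ∈ E, c ^ r ≤ c ^ #(outNbhd ω v)) :
    dPr p E ≤ (1 - p + p * c) ^ (n - 1) / c ^ r := by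
  rw [← dEx_pow_card_outNbhd]
  exact dPr_le_dEx_div h0 h1 (fun ω => pow_nonneg hc.le _) (rpow_pos_of_pos hc r) hE

lemma dPr_half_le_card_outNbhd_le (hp0 : 0 < p) (hp : p ≤ 1 / 2) (v : Fin n) :
    dPr p {ω | ((n : ℝ) - 1) / 2 ≤ #(outNbhd ω v)}
      ≤ (4 * p * (1 - p)) ^ (((n : ℝ) - 1) / 2) := by
  set r := ((n : ℝ) - 1) / 2
  -- the optimal exponential tilt at the threshold `(n - 1) / 2`
  set c := (1 - p) / p
  have hc : 1 ≤ c := by rw [le_div_iff₀ hp0]; linarith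
  have hbound := dPr_le_pow_card_outNbhd hp0.le (by linarith) v (r := r) (by linarith)
    fun ω hω => (rpow_le_rpow_of_exponent_le hc hω).trans_eq (rpow_natCast c _)
  have hmgf : 1 - p + p * c = 2 * (1 - p) := by
    rw [mul_div_cancel₀ _ hp0.ne']; ring
  have hsq : (2 * (1 - p)) ^ (n - 1) = ((2 * (1 - p)) ^ 2) ^ r := by
    rw [← rpow_natCast, Nat.cast_sub v.pos, Nat.cast_one, ← rpow_natCast,
      ← rpow_mul (by linarith)]
    congr 1
    simp only [r]
    push_cast
    ring
  have hquot : (2 * (1 - p)) ^ 2 / c = 4 * p * (1 - p) := by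
    simp only [c]; field_simp; ring
  rwa [hmgf, hsq, ← div_rpow (sq_nonneg _) (by linarith), hquot] at hbound

lemma dPr_card_outNbhd_lt_le (h0 : 0 ≤ p) (h1 : p ≤ 1) {t : ℝ} (ht : 0 ≤ t) (v : Fin n)
    (a : ℝ) :
    dPr p {ω | (#(outNbhd ω v) : ℝ) < a} ≤ exp (t * a - (n - 1) * p * (1 - exp (-t))) := by
  have hs1 : exp (-t) ≤ 1 := exp_le_one_iff.mpr (by linarith)
  have hbound := dPr_le_pow_card_outNbhd h0 h1 v (r := a) (exp_pos (-t))
    fun ω hω => (rpow_le_rpow_of_exponent_ge (exp_pos _) hs1 (le_of_lt hω)).trans_eq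
      (rpow_natCast _ _)
  have hmgf : (1 - p + p * exp (-t)) ^ (n - 1) ≤ exp (-((n - 1) * p * (1 - exp (-t)))) := by
    calc (1 - p + p * exp (-t)) ^ (n - 1) ≤ exp (-(p * (1 - exp (-t)))) ^ (n - 1) := by
          refine pow_le_pow_left₀ (by nlinarith [exp_pos (-t)]) ?_ _
          linarith [add_one_le_exp (-(p * (1 - exp (-t))))]
      _ = exp (-((n - 1) * p * (1 - exp (-t)))) := by
          rw [← exp_nat_mul, Nat.cast_sub v.pos, Nat.cast_one]; ring_nf
  refine hbound.trans ((div_le_div_of_nonneg_right hmgf (rpow_nonneg (exp_pos _).le _)).trans_eq ?_)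
  rw [← exp_mul, ← exp_sub]
  ring_nf

end Tails

section NonSeymour

variable {n : ℕ} {p : ℝ}

def noArcs (S T : Finset (Fin n)) : Set (DOmega n) :=
  {ω | ∀ u w, u ∈ S → w ∈ T → ω u w = false}

lemma dPr_noArcs {S T : Finset (Fin n)} (hST : Disjoint S T) :
    dPr p (noArcs S T) = (1 - p) ^ (#S * #T) := by
  have hfactor : ∀ u w : Fin n,
      (∑ b, if (u ∈ S → w ∈ T → b = false) then arcWeight p u w b else 0)
        = if u ∈ S ∧ w ∈ T then 1 - p else 1 := by
    intro u w
    by_cases huw : u ∈ S ∧ w ∈ T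
    · have hne : u ≠ w := fun h => disjoint_left.mp hST huw.1 (h ▸ huw.2)
      simp [arcWeight, huw, hne]
    · rw [if_neg huw, ← sum_arcWeight (p := p) u w]
      exact sum_congr rfl fun b _ => if_pos fun hu hw => absurd ⟨hu, hw⟩ huw
  rw [noArcs, dPr_setOf_forall fun u w b => u ∈ S → w ∈ T → b = false]
  simp only [hfactor, ite_and, prod_ite_irrel, prod_const_one, prod_ite_mem, univ_inter,
    prod_const, ← pow_mul, mul_comm]

lemma setOf_outNbhd_eq {v : Fin n} {S : Finset (Fin n)} (hvS : v ∉ S) :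
    {ω : DOmega n | outNbhd ω v = S}
      = {ω | ∀ u w, u = v → u ≠ w → (ω u w = true ↔ w ∈ S)} := by
  ext ω
  simp only [Set.mem_ofPred_eq, Finset.ext_iff, outNbhd, mem_filter, mem_univ, true_and]
  constructor
  · rintro h u w rfl huw
    rw [← h w]; simp [huw]
  · intro h w
    by_cases hvw : v = w
    · subst hvw; simp [hvS]
    · simp [hvw, h v w rfl hvw]

lemma dPr_outNbhd_eq_inter_noArcs {v : Fin n} {S T : Finset (Fin n)} (hvS : v ∉ S)
    (hST : Disjoint S T) :
    dPr p ({ω | outNbhd ω v = S} ∩ noArcs S T)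
      = dPr p {ω | outNbhd ω v = S} * (1 - p) ^ (#S * #T) := by
  rw [← dPr_noArcs hST, setOf_outNbhd_eq hvS, noArcs,
    ← dPr_setOf_forall_and (fun u w b => u = v → u ≠ w → (b = true ↔ w ∈ S))
      (fun u w b => u ∈ S → w ∈ T → b = false) ?_]
  · congr 1; ext ω; simp only [Set.mem_inter_iff, Set.mem_ofPred_eq, ← forall_and]
  intro u w
  by_cases huv : u = v
  · exact Or.inr fun b hu => absurd (huv ▸ hu) hvS
  · exact Or.inl fun b h => absurd h huv

lemma sum_dPr_fiber_le_one (h0 : 0 ≤ p) (h1 : p ≤ 1) {α : Type*} [DecidableEq α]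
    (f : DOmega n → α) (I : Finset α) : ∑ a ∈ I, dPr p {ω | f ω = a} ≤ 1 := by
  calc ∑ a ∈ I, dPr p {ω | f ω = a}
      = ∑ ω, ∑ a ∈ I, if f ω = a then dwt p ω else 0 := by
        rw [sum_comm]; simp only [dPr, Set.indicator_apply, Set.mem_ofPred_eq]
    _ ≤ ∑ ω, dwt p ω := by
        refine sum_le_sum fun ω _ => ?_
        rw [sum_ite_eq]
        split_ifs
        exacts [le_rfl, dwt_nonneg h0 h1 ω]
    _ = 1 := sum_dwt

lemma exists_noArcs_of_not_dSeymour {ω : DOmega n} {v : Fin n} (h : ¬ dSeymour ω v)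
    (hd : 2 * #(outNbhd ω v) ≤ n) :
    ∃ T ∈ powersetCard (n - 2 * #(outNbhd ω v)) (univ.erase v \ outNbhd ω v),
      ω ∈ noArcs (outNbhd ω v) T := by
  classical
  generalize hS : outNbhd ω v = S at hd ⊢
  set N2 := (dN2 ω v).toFinset
  have hN2 : #N2 < #S := by
    rwa [dSeymour, ← coe_outNbhd, hS, Set.ncard_coe_finset, Set.ncard_eq_toFinset_card',
      not_le] at h
  have hcard : n - 2 * #S ≤ #((univ.erase v \ S) \ N2) := by
    have := le_card_sdiff N2 (univ.erase v \ S)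
    rw [card_sdiff_of_subset (hS ▸ outNbhd_subset_erase ω v), card_erase_of_mem (mem_univ v),
      card_univ, Fintype.card_fin] at this
    omega
  obtain ⟨T, hTC, hT⟩ := exists_subset_card_eq hcard
  refine ⟨T, mem_powersetCard.mpr ⟨hTC.trans sdiff_subset, hT⟩, fun x w hx hw => ?_⟩
  obtain ⟨⟨hwv, hwS⟩, hwN2⟩ : (w ≠ v ∧ w ∉ S) ∧ w ∉ N2 := by simpa using hTC hw
  have hvx : v ≠ x ∧ ω v x = true := by simpa [← hS, outNbhd] using hx
  by_contra hxw
  refine hwN2 (Set.mem_toFinset.mpr ⟨hwv, fun hvw => hwS ?_, x, hvx, ?_, by simpa using hxw⟩)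
  · simpa [← hS, outNbhd, dadj] using hvw
  · rintro rfl; exact hwS hx

def nonSeymourModerate (v : Fin n) (a : ℝ) : Set (DOmega n) :=
  {ω | ¬ dSeymour ω v ∧ a ≤ #(outNbhd ω v) ∧ 2 * #(outNbhd ω v) + 2 ≤ n}

lemma dPr_nonSeymourModerate_le (h0 : 0 ≤ p) (h1 : p ≤ 1) (v : Fin n) (a : ℝ) {B : ℝ}
    (hB : 0 ≤ B)
    (hchoose : ∀ d : ℕ, a ≤ d → 2 * d + 2 ≤ n →
      ((n - 1 - d).choose (n - 2 * d) : ℝ) * (1 - p) ^ (d * (n - 2 * d)) ≤ B) :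
    dPr p (nonSeymourModerate v a) ≤ B := by
  classical
  set nbhds := (univ.erase v).powerset.filter fun S => a ≤ #S ∧ 2 * #S + 2 ≤ n
  have hcover : nonSeymourModerate v a
      ⊆ ⋃ i ∈ nbhds.sigma fun S => powersetCard (n - 2 * #S) (univ.erase v \ S),
          {ω | outNbhd ω v = i.1} ∩ noArcs i.1 i.2 := by
    rintro ω ⟨hω, ha, hd⟩
    obtain ⟨T, hT, hωT⟩ := exists_noArcs_of_not_dSeymour hω (by omega)
    refine Set.mem_iUnion₂.mpr ⟨⟨outNbhd ω v, T⟩, mem_sigma.mpr ⟨?_, hT⟩, rfl, hωT⟩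
    exact mem_filter.mpr ⟨mem_powerset.mpr (outNbhd_subset_erase ω v), ha, hd⟩
  refine (dPr_le_sum_of_subset_biUnion h0 h1 _ _ hcover).trans ?_
  rw [sum_sigma]
  calc _ ≤ ∑ S ∈ nbhds, dPr p {ω | outNbhd ω v = S} * B := sum_le_sum fun S hS => ?_
    _ ≤ 1 * B := by
        rw [← sum_mul]
        exact mul_le_mul_of_nonneg_right (sum_dPr_fiber_le_one h0 h1 _ _) hB
    _ = B := one_mul B
  obtain ⟨hSv, haS, hdS⟩ : S ⊆ univ.erase v ∧ a ≤ #S ∧ 2 * #S + 2 ≤ n := by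
    simpa [nbhds] using hS
  have hvS : v ∉ S := fun h => by simpa using hSv h
  have hterm : ∀ T ∈ powersetCard (n - 2 * #S) (univ.erase v \ S),
      dPr p ({ω | outNbhd ω v = S} ∩ noArcs S T)
        = dPr p {ω | outNbhd ω v = S} * (1 - p) ^ (#S * (n - 2 * #S)) := by
    intro T hT
    obtain ⟨hTS, hTcard⟩ := mem_powersetCard.mp hT
    rw [dPr_outNbhd_eq_inter_noArcs hvS (disjoint_sdiff.mono_right hTS), hTcard]
  rw [sum_congr rfl hterm, sum_const, card_powersetCard, card_sdiff_of_subset hSv,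
    card_erase_of_mem (mem_univ v), card_univ, Fintype.card_fin, nsmul_eq_mul, mul_left_comm]
  exact mul_le_mul_of_nonneg_left (hchoose _ haS hdS) (dPr_nonneg h0 h1 _)

end NonSeymour

section Estimates

lemma rpow_neg_eq_exp {x : ℝ} (hx : 0 < x) (c : ℝ) : x ^ (-c) = exp (-(c * log x)) := by
  rw [rpow_def_of_pos hx]; ring_nf

lemma mul_rpow_neg_one_add {x : ℝ} (hx : 0 < x) (c : ℝ) : x * x ^ (-(1 + c)) = x ^ (-c) := by
  conv_lhs => enter [1]; rw [← rpow_one x]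
  rw [← rpow_add hx]; ring_nf

lemma mul_one_sub_le_one_sub_exp_neg {t : ℝ} (ht : 0 ≤ t) : t * (1 - t) ≤ 1 - exp (-t) := by
  have h := mul_le_mul_of_nonneg_right (add_one_le_exp t) (exp_pos (-t)).le
  rw [← exp_add, add_neg_cancel, exp_zero] at h
  nlinarith [one_sub_le_exp_neg t]

lemma four_mul_mul_one_sub_rpow_le {n : ℕ} {p η : ℝ} (hn : 0 < n) (hlog : 0 ≤ log n)
    (hp0 : 0 ≤ p) (hp : p ≤ 1 / 2)
    (hexp : 2 * p * exp (1 - 2 * p) ≤ 1 - (2 + η) * log n / n)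
    (hη : 1 + η / 4 ≤ (1 + η / 2) * (1 - 1 / n)) :
    (4 * p * (1 - p)) ^ (((n : ℝ) - 1) / 2) ≤ (n : ℝ) ^ (-(1 + η / 4)) := by
  have hn' : (0 : ℝ) < n := Nat.cast_pos.mpr hn
  have hbase : 4 * p * (1 - p) ≤ exp (-((2 + η) * log n / n)) := by
    have h2 : 2 * (1 - p) ≤ exp (1 - 2 * p) := by linarith [add_one_le_exp (1 - 2 * p)]
    have h4 : 4 * p * (1 - p) ≤ 2 * p * exp (1 - 2 * p) := by nlinarith
    linarith [add_one_le_exp (-((2 + η) * log n / n))]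
  have hexpo : (1 + η / 4) * log n ≤ (2 + η) * log n / n * (((n : ℝ) - 1) / 2) := by
    calc (1 + η / 4) * log n ≤ (1 + η / 2) * (1 - 1 / n) * log n :=
          mul_le_mul_of_nonneg_right hη hlog
      _ = (2 + η) * log n / n * (((n : ℝ) - 1) / 2) := by field_simp
  calc (4 * p * (1 - p)) ^ (((n : ℝ) - 1) / 2)
      ≤ exp (-((2 + η) * log n / n)) ^ (((n : ℝ) - 1) / 2) := by
        refine rpow_le_rpow (by nlinarith) hbase ?_
        have : (1 : ℝ) ≤ n := Nat.one_le_cast.mpr hn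
        linarith
    _ ≤ (n : ℝ) ^ (-(1 + η / 4)) := by
        rw [← exp_mul, rpow_neg_eq_exp hn']
        exact exp_le_exp.mpr (by linarith)

lemma lower_tail_exponent_le {n : ℕ} {p t a : ℝ} (hp0 : 0 ≤ p) (hp1 : p ≤ 1) (ht0 : 0 ≤ t)
    (ha : a ≤ (1 - 2 * t) * (n * p)) :
    t * a - (n - 1) * p * (1 - exp (-t)) ≤ 1 - t ^ 2 * (n * p) := by
  have hnp : 0 ≤ (n : ℝ) * p := mul_nonneg n.cast_nonneg hp0
  have he : 0 ≤ 1 - exp (-t) := sub_nonneg.mpr (exp_le_one_iff.mpr (by linarith))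
  have h1 := mul_le_mul_of_nonneg_left (mul_one_sub_le_one_sub_exp_neg ht0) hnp
  have h2 : p * (1 - exp (-t)) ≤ 1 := mul_le_one₀ hp1 he (by linarith [exp_pos (-t)])
  nlinarith [mul_le_mul_of_nonneg_left ha ht0]

lemma choose_mul_one_sub_pow_le {n d : ℕ} {p c : ℝ} (hp1 : p ≤ 1) (hc : 0 ≤ c)
    (hpd : (1 + c) * log n ≤ p * d) (hd : 2 * d + 2 ≤ n) :
    ((n - 1 - d).choose (n - 2 * d) : ℝ) * (1 - p) ^ (d * (n - 2 * d)) ≤ (n : ℝ) ^ (-c) := by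
  have hn : (0 : ℝ) < n := by norm_cast; omega
  have hrow : (n : ℝ) * (1 - p) ^ d ≤ (n : ℝ) ^ (-c) := by
    calc (n : ℝ) * (1 - p) ^ d ≤ n * exp (-p) ^ d := by
          gcongr
          exact one_sub_le_exp_neg p
      _ ≤ n * (n : ℝ) ^ (-(1 + c)) := by
          rw [← exp_nat_mul, rpow_neg_eq_exp hn]
          gcongr
          linarith
      _ = (n : ℝ) ^ (-c) := mul_rpow_neg_one_add hn c
  have hrow1 : (n : ℝ) * (1 - p) ^ d ≤ 1 :=
    hrow.trans (rpow_le_one_of_one_le_of_nonpos (by norm_cast; omega) (by linarith))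
  have hchoose : ((n - 1 - d).choose (n - 2 * d) : ℝ) ≤ (n : ℝ) ^ (n - 2 * d) := by
    exact_mod_cast (Nat.choose_le_pow _ _).trans (Nat.pow_le_pow_left (by omega) _)
  calc ((n - 1 - d).choose (n - 2 * d) : ℝ) * (1 - p) ^ (d * (n - 2 * d))
      ≤ (n : ℝ) ^ (n - 2 * d) * ((1 - p) ^ d) ^ (n - 2 * d) := by
        rw [← pow_mul]
        gcongr
    _ = ((n : ℝ) * (1 - p) ^ d) ^ (n - 2 * d) := (mul_pow _ _ _).symm
    _ ≤ (n : ℝ) * (1 - p) ^ d :=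
        pow_le_of_le_one (by have := sub_nonneg.mpr hp1; positivity) hrow1 (by omega)
    _ ≤ (n : ℝ) ^ (-c) := hrow

end Estimates

section Combination

variable {n : ℕ} {p ε η : ℝ}

lemma not_dSeymour_subset (v : Fin n) (a : ℝ) :
    {ω : DOmega n | ¬ dSeymour ω v} ⊆ {ω | ((n : ℝ) - 1) / 2 ≤ #(outNbhd ω v)} ∪
      ({ω | (#(outNbhd ω v) : ℝ) < a} ∪ nonSeymourModerate v a) := by
  intro ω hω
  by_cases hA : ((n : ℝ) - 1) / 2 ≤ #(outNbhd ω v)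
  · exact Or.inl hA
  by_cases hB : (#(outNbhd ω v) : ℝ) < a
  · exact Or.inr (Or.inl hB)
  refine Or.inr (Or.inr ⟨hω, not_lt.mp hB, ?_⟩)
  have : ((2 * #(outNbhd ω v) + 2 : ℕ) : ℝ) < n + 1 := by push_cast; linarith [not_le.mp hA]
  exact Nat.lt_succ_iff.mp (by exact_mod_cast this)

lemma dPr_not_dSeymour_le (hε : 0 < ε) (v : Fin n) (hp0 : 0 < p) (hp : p < 1 / 2)
    (hlog : 0 ≤ log n) (hnp2 : (2 + ε) * log n ≤ n * p ^ 2)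
    (hnp : 1 + 2 * log n ≤ (ε / (8 + 4 * ε)) ^ 2 * (n * p))
    (hexp : 2 * p * exp (1 - 2 * p) ≤ 1 - (2 + η) * log n / n)
    (hη : 1 + η / 4 ≤ (1 + η / 2) * (1 - 1 / n)) :
    dPr p {ω | ¬ dSeymour ω v}
      ≤ (n : ℝ) ^ (-(1 + η / 4)) + (n : ℝ) ^ (-(1 + 1 : ℝ))
        + (n : ℝ) ^ (-(1 + ε / 2)) := by
  have hp1 : p ≤ 1 := by linarith
  have hn : (0 : ℝ) < n := Nat.cast_pos.mpr v.pos
  set t := ε / (8 + 4 * ε)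
  -- above the threshold `a`, already `(1 - p)^d ≤ n^{-(2 + ε/2)}`
  set a := (2 + ε / 2) * log n / p
  have hA := (dPr_half_le_card_outNbhd_le hp0 hp.le v).trans
    (four_mul_mul_one_sub_rpow_le v.pos hlog hp0.le hp.le hexp hη)
  have hB : dPr p {ω | (#(outNbhd ω v) : ℝ) < a} ≤ (n : ℝ) ^ (-(1 + 1 : ℝ)) := by
    have ha : a ≤ (1 - 2 * t) * (n * p) := by
      have ht : 1 - 2 * t = (2 + ε / 2) / (2 + ε) := by simp only [t]; field_simp; ring
      rw [div_le_iff₀ hp0, ht]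
      calc (2 + ε / 2) * log n = (2 + ε / 2) / (2 + ε) * ((2 + ε) * log n) := by field_simp
        _ ≤ (2 + ε / 2) / (2 + ε) * (n * p ^ 2) := by gcongr
        _ = (2 + ε / 2) / (2 + ε) * (n * p) * p := by ring
    refine (dPr_card_outNbhd_lt_le hp0.le hp1 (t := t) (by positivity) v a).trans ?_
    rw [rpow_neg_eq_exp hn]
    exact exp_le_exp.mpr ((lower_tail_exponent_le hp0.le hp1 (by positivity) ha).trans
      (by linarith))
  have hC : dPr p (nonSeymourModerate v a) ≤ (n : ℝ) ^ (-(1 + ε / 2)) := by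
    refine dPr_nonSeymourModerate_le hp0.le hp1 v a (by positivity) fun d had hd => ?_
    refine choose_mul_one_sub_pow_le hp1 (by positivity) ?_ hd
    calc (1 + (1 + ε / 2)) * log n = p * a := by simp only [a]; field_simp; ring
      _ ≤ p * d := mul_le_mul_of_nonneg_left had hp0.le
  calc dPr p {ω | ¬ dSeymour ω v}
      ≤ _ := dPr_mono hp0.le hp1 (not_dSeymour_subset v a)
    _ ≤ _ := dPr_union_le hp0.le hp1 _ _
    _ ≤ _ := add_le_add le_rfl (dPr_union_le hp0.le hp1 _ _)
    _ ≤ _ := add_le_add hA (add_le_add hB hC)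
    _ = _ := (add_assoc _ _ _).symm

lemma setOf_dS_ne_subset :
    {ω : DOmega n | dS ω ≠ n} ⊆ ⋃ v ∈ (univ : Finset (Fin n)), {ω | ¬ dSeymour ω v} := by
  intro ω hω
  by_contra h
  simp only [Set.mem_iUnion, Set.mem_ofPred_eq, mem_univ, exists_true_left, not_exists,
    not_not] at h
  have huniv : {v | dSeymour ω v} = Set.univ := Set.eq_univ_of_forall h
  apply hω
  rw [dS, huniv, Set.ncard_univ, Nat.card_eq_fintype_card, Fintype.card_fin]

lemma dPr_dS_ne_le (hε : 0 < ε) (hlog : 1 ≤ log n)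
    (hsqrt : 1 + 2 * log n ≤ (ε / (8 + 4 * ε)) ^ 2 * √n)
    (hη : 1 + η / 4 ≤ (1 + η / 2) * (1 - 1 / n))
    (hp_lower : √((2 + ε) * log n / n) ≤ p) (hp : p < 1 / 2)
    (hexp : 2 * p * exp (1 - 2 * p) ≤ 1 - (2 + η) * log n / n) :
    dPr p {ω : DOmega n | dS ω ≠ n}
      ≤ (n : ℝ) ^ (-(η / 4)) + (n : ℝ) ^ (-1 : ℝ) + (n : ℝ) ^ (-(ε / 2)) := by
  have hn : (0 : ℝ) < n := by
    rcases Nat.eq_zero_or_pos n with rfl | h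
    · norm_num at hlog
    · exact Nat.cast_pos.mpr h
  have hlog0 : 0 < (2 + ε) * log n / n := by positivity
  have hp0 : 0 < p := (sqrt_pos.mpr hlog0).trans_le hp_lower
  have hnp2 : (2 + ε) * log n ≤ n * p ^ 2 := by
    have := pow_le_pow_left₀ (sqrt_nonneg _) hp_lower 2
    rw [sq_sqrt hlog0.le, div_le_iff₀ hn] at this
    linarith
  have hnp : √n ≤ n * p := by
    have h1 : 1 ≤ n * p ^ 2 := by nlinarith
    rw [sqrt_le_left (by positivity)]
    nlinarith
  have hvertex := fun v => dPr_not_dSeymour_le hε v hp0 hp (by linarith) hnp2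
    (hsqrt.trans (by gcongr)) hexp hη
  refine (dPr_le_sum_of_subset_biUnion hp0.le (by linarith) _ _ setOf_dS_ne_subset).trans ?_
  refine (sum_le_sum fun v _ => hvertex v).trans_eq ?_
  rw [sum_const, card_univ, Fintype.card_fin, nsmul_eq_mul, mul_add, mul_add,
    mul_rpow_neg_one_add hn, mul_rpow_neg_one_add hn, mul_rpow_neg_one_add hn]

end Combination

section Asymptotics

lemma eventually_one_add_two_mul_log_le_mul_sqrt {c : ℝ} (hc : 0 < c) :
    ∀ᶠ x : ℝ in atTop, 1 + 2 * log x ≤ c * √x := by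
  have hsqrt : Tendsto (fun x : ℝ => ‖x ^ (1 / 2 : ℝ)‖) atTop atTop :=
    tendsto_norm_atTop_atTop.comp (tendsto_rpow_atTop (by norm_num))
  have ho := ((Asymptotics.isLittleO_one_left_iff ℝ).mpr hsqrt).add
    ((isLittleO_log_rpow_atTop (by norm_num : (0 : ℝ) < 1 / 2)).const_mul_left 2)
  filter_upwards [ho.bound hc, eventually_ge_atTop 0] with x hx hx0
  rw [sqrt_eq_rpow]
  exact (le_abs_self _).trans (by simpa [abs_of_nonneg (rpow_nonneg hx0 _)] using hx)

lemma tendsto_natCast_rpow_neg_sum {a b c : ℝ} (ha : 0 < a) (hb : 0 < b) (hc : 0 < c) :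
    Tendsto (fun n : ℕ => (n : ℝ) ^ (-a) + (n : ℝ) ^ (-b) + (n : ℝ) ^ (-c))
      atTop (𝓝 0) := by
  have h : ∀ {y : ℝ}, 0 < y → Tendsto (fun n : ℕ => (n : ℝ) ^ (-y)) atTop (𝓝 0) :=
    fun hy => (tendsto_rpow_neg_atTop hy).comp tendsto_natCast_atTop_atTop
  simpa using ((h ha).add (h hb)).add (h hc)

end Asymptotics

/-- Fix `ε > 0` and `η > 0`, and let `(p_n)` be a sequence with
`√((2+ε)·log n / n) ≤ p_n < 1/2` and `2·p_n·e^{1−2p_n} ≤ 1 − (2+η)·log n / n` for all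
large `n`.  Then with high probability every vertex of `D(n, p_n)` is a Seymour vertex:
`P(S_n = n) → 1` as `n → ∞`. -/
theorem digraph_whp_all_seymour (ε η : ℝ) (hε : 0 < ε) (hη : 0 < η)
    (p : ℕ → ℝ)
    (hp : ∀ᶠ n : ℕ in Filter.atTop,
      Real.sqrt ((2 + ε) * Real.log n / n) ≤ p n ∧ p n < 1 / 2 ∧
        2 * p n * Real.exp (1 - 2 * p n) ≤ 1 - (2 + η) * Real.log n / n) :
    Filter.Tendsto (fun n : ℕ => dPr (p n) {ω : DOmega n | dS ω = n}) Filter.atTop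
      (nhds 1) := by
  have hlog : ∀ᶠ n : ℕ in atTop, 1 ≤ log n :=
    tendsto_natCast_atTop_atTop.eventually (tendsto_log_atTop.eventually_ge_atTop 1)
  have hsqrt : ∀ᶠ n : ℕ in atTop, 1 + 2 * log n ≤ (ε / (8 + 4 * ε)) ^ 2 * √n :=
    tendsto_natCast_atTop_atTop.eventually
      (eventually_one_add_two_mul_log_le_mul_sqrt (by positivity))
  have hη' : ∀ᶠ n : ℕ in atTop, 1 + η / 4 ≤ (1 + η / 2) * (1 - 1 / (n : ℝ)) := by
    have h := tendsto_one_div_atTop_nhds_zero_nat.const_sub 1 |>.const_mul (1 + η / 2)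
    exact h.eventually_const_le (by linarith)
  have hbad : Tendsto (fun n : ℕ => dPr (p n) {ω : DOmega n | dS ω ≠ n}) atTop (𝓝 0) := by
    refine squeeze_zero' ?_ ?_ (tendsto_natCast_rpow_neg_sum (a := η / 4) (c := ε / 2)
      (by positivity) one_pos (by positivity))
    · filter_upwards [hp] with n hn
      exact dPr_nonneg ((sqrt_nonneg _).trans hn.1) (by linarith [hn.2.1]) _
    · filter_upwards [hp, hlog, hsqrt, hη'] with n hn hlog hsqrt hη'
      exact dPr_dS_ne_le hε hlog hsqrt hη' hn.1 hn.2.1 hn.2.2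
  have hcompl : ∀ n : ℕ, dPr (p n) {ω : DOmega n | dS ω = n}
      = 1 - dPr (p n) {ω : DOmega n | dS ω ≠ n} :=
    fun n => eq_sub_of_add_eq (dPr_add_dPr_compl _)
  simpa only [hcompl, sub_zero] using hbad.const_sub 1
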